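/- arXiv:2303.08777 — 3 statements merged into one kernel-verified Lean document; each statement's English description precedes it below -/
import Mathlib

section
/- Assume the loss function is bounded. For each ε > 0 let B_{N,ε} and B̂_{N,ε} be positive real-valued increasing functions on ℤ₊ such that for every candidate model ℳ ∈ 𝒞 and every j = 1,…,m, ℙ( sup_{h∈ℳ} |L_{D_N^{(j)}}(h) − L(h)| > ε ) ≤ B_{N,ε}(d_VC(ℳ,ℓ)) and ℙ( sup_{h∈ℳ} |L̂^{(j)}(h) − L(h)| > ε ) ≤ B̂_{N,ε}(d_VC(ℳ,ℓ)). Let ℳ̂ be any random model in 𝒞 minimizing the cross-validated estimator L̂ over 𝒞. Then ℙ( L(ℳ̂) ≠ L(ℳ*) ) ≤ m · 𝔪(𝒞) · [ B_{N,ε*/8}(d_VC(𝒞)) + B̂_{N,ε*/4}(d_VC(𝒞)) ]. -/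
open MeasureTheory ProbabilityTheory

/-- The N-th shatter coefficient of a class `𝒮` of subsets of `Z`: the maximal number of
dichotomies of `k` points realized by the sets in `𝒮`. -/
noncomputable def shatterCoeff {Z : Type*} (𝒮 : Set (Set Z)) (k : ℕ) : ℕ :=
  ⨆ z : Fin k → Z, Nat.card {v : Fin k → Prop // ∃ A ∈ 𝒮, v = fun i => z i ∈ A}

/-- The VC dimension of a class of sets: the largest `k` shattered by the class. -/
noncomputable def vcDim {Z : Type*} (𝒮 : Set (Set Z)) : ℕ :=
  sSup {k : ℕ | shatterCoeff 𝒮 k = 2 ^ k}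

/-- The class of super-level sets `{z | β ≤ ℓ z h}`, `h ∈ M`, `0 < β < C`, associated to a
bounded loss function `ℓ` with values in `[0, C]` and a model `M`. -/
def lossClass {Z H : Type*} (ℓ : Z → H → ℝ) (C : ℝ) (M : Set H) : Set (Set Z) :=
  {A | ∃ h ∈ M, ∃ β : ℝ, 0 < β ∧ β < C ∧ A = {z | β ≤ ℓ z h}}

/-- The VC dimension `d_VC(M, ℓ)` of a model `M` under a bounded loss function `ℓ`. -/
noncomputable def dVC {Z H : Type*} (ℓ : Z → H → ℝ) (C : ℝ) (M : Set H) : ℕ :=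
  vcDim (lossClass ℓ C M)

/-- for a bounded loss, if per-model deviation bounds B, B̂ (increasing in the
VC dimension) hold for the training and validation empirical risks, then a model ℳ̂
minimizing the cross-validated risk estimator satisfies
ℙ( L(ℳ̂) ≠ L(ℳ*) ) ≤ m · 𝔪(𝒞) · [ B_{N,ε*/8}(d_VC(𝒞)) + B̂_{N,ε*/4}(d_VC(𝒞)) ]. -/
theorem stmt_2 {Ω 𝒵 H : Type*} [MeasurableSpace Ω] [MeasurableSpace 𝒵]
    (μ : Measure Ω) [IsProbabilityMeasure μ]
    (P : Measure 𝒵) [IsProbabilityMeasure P]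
    (N : ℕ) (hN : 1 ≤ N)
    (Z : Fin N → Ω → 𝒵) (hZmeas : ∀ k, Measurable (Z k))
    (hindep : iIndepFun Z μ)
    (hdist : ∀ k, μ.map (Z k) = P)
    (C : ℝ) (hC : 0 < C)
    (ℓ : 𝒵 → H → ℝ) (hℓ : ∀ z h, ℓ z h ∈ Set.Icc 0 C)
    (hℓmeas : ∀ h, Measurable fun z => ℓ z h)
    (L : H → ℝ) (hL : ∀ h, L h = ∫ z, ℓ z h ∂P)
    {J : Type*} [Fintype J] [Nonempty J]
    (Mset : J → Set H) (hcover : ⋃ i, Mset i = Set.univ)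
    (m : ℕ) (hm : 1 ≤ m)
    (train valid : Fin m → Finset (Fin N))
    (htne : ∀ j, (train j).Nonempty) (hvne : ∀ j, (valid j).Nonempty)
    (hdisj : ∀ j, Disjoint (train j) (valid j))
    (trainRisk valRisk : Fin m → Ω → H → ℝ)
    (htrain : ∀ j ω h,
      trainRisk j ω h = ((train j).card : ℝ)⁻¹ * ∑ k ∈ train j, ℓ (Z k ω) h)
    (hval : ∀ j ω h,
      valRisk j ω h = ((valid j).card : ℝ)⁻¹ * ∑ k ∈ valid j, ℓ (Z k ω) h)
    (erm : Fin m → J → Ω → H)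
    (hermMem : ∀ j i ω, erm j i ω ∈ Mset i)
    (hermMin : ∀ j i ω, ∀ h ∈ Mset i, trainRisk j ω (erm j i ω) ≤ trainRisk j ω h)
    (Lhat : Ω → J → ℝ)
    (hLhat : ∀ ω i, Lhat ω i = (m : ℝ)⁻¹ * ∑ j, valRisk j ω (erm j i ω))
    (hstar : J → H) (hstarMem : ∀ i, hstar i ∈ Mset i)
    (hstarMin : ∀ i, ∀ h ∈ Mset i, L (hstar i) ≤ L h)
    (istar : J) (histar : ∀ i, L (hstar istar) ≤ L (hstar i))
    (εstar : ℝ)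
    (hεstar : IsLeast {d : ℝ | ∃ i, L (hstar istar) < L (hstar i) ∧
      d = L (hstar i) - L (hstar istar)} εstar)
    (B Bhat : ℝ → ℕ → ℝ)
    (hBpos : ∀ ε, 0 < ε → ∀ k, 0 < B ε k)
    (hBhatpos : ∀ ε, 0 < ε → ∀ k, 0 < Bhat ε k)
    (hBmono : ∀ ε, 0 < ε → Monotone (B ε))
    (hBhatmono : ∀ ε, 0 < ε → Monotone (Bhat ε))
    (hB : ∀ ε, 0 < ε → ∀ i j,
      (μ {ω | ∃ h ∈ Mset i, ε < |trainRisk j ω h - L h|}).toReal ≤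
        B ε (dVC ℓ C (Mset i)))
    (hBhat : ∀ ε, 0 < ε → ∀ i j,
      (μ {ω | ∃ h ∈ Mset i, ε < |valRisk j ω h - L h|}).toReal ≤
        Bhat ε (dVC ℓ C (Mset i)))
    (Mhat : Ω → J) (hMhat : ∀ ω i, Lhat ω (Mhat ω) ≤ Lhat ω i) :
    (μ {ω | L (hstar (Mhat ω)) ≠ L (hstar istar)}).toReal ≤
      (m : ℝ) * (Set.ncard {M : Set H | M ∈ Set.range Mset ∧
          ∀ i, M ⊆ Mset i → M = Mset i} : ℝ) *
        (B (εstar / 8) (⨆ i, dVC ℓ C (Mset i)) +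
          Bhat (εstar / 4) (⨆ i, dVC ℓ C (Mset i))) := by

  classical
  obtain ⟨⟨i0, hi0lt, hi0eq⟩, hlbε⟩ := hεstar
  have hε : 0 < εstar := by rw [hi0eq]; linarith
  have hm0 : (0:ℝ) < m := by exact_mod_cast hm
  set D := ⨆ i, dVC ℓ C (Mset i) with hD
  set MaxC : Set (Set H) := {M : Set H | M ∈ Set.range Mset ∧
      ∀ i, M ⊆ Mset i → M = Mset i} with hMaxC
  have hMaxFin : MaxC.Finite := (Set.finite_range Mset).subset (fun M hM => hM.1)
  set F := hMaxFin.toFinset with hF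
  have hmax : ∀ i : J, ∃ M ∈ MaxC, Mset i ⊆ M := by
    intro i
    have hSfin : {M : Set H | M ∈ Set.range Mset ∧ Mset i ⊆ M}.Finite :=
      (Set.finite_range Mset).subset (fun M hM => hM.1)
    have hSne : {M : Set H | M ∈ Set.range Mset ∧ Mset i ⊆ M}.Nonempty :=
      ⟨Mset i, ⟨⟨i, rfl⟩, subset_rfl⟩⟩
    obtain ⟨M, hMS, hMmax'⟩ := hSfin.exists_maximalFor id _ hSne
    have hMS : M ∈ {M : Set H | M ∈ Set.range Mset ∧ Mset i ⊆ M} := hMS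
    have hMmax : ∀ M' ∈ {M : Set H | M ∈ Set.range Mset ∧ Mset i ⊆ M}, M ⊆ M' → M = M' :=
      fun M' h1 h2 => le_antisymm h2 (hMmax' h1 h2)
    exact ⟨M, ⟨hMS.1, fun i' hsub =>
      hMmax (Mset i') ⟨⟨i', rfl⟩, hMS.2.trans hsub⟩ hsub⟩, hMS.2⟩
  set E : Fin m → Set H → Set Ω := fun j M =>
    {ω | ∃ h ∈ M, εstar/8 < |trainRisk j ω h - L h|} ∪
    {ω | ∃ h ∈ M, εstar/4 < |valRisk j ω h - L h|} with hE
  set U : Set Ω := ⋃ j, ⋃ M ∈ F, E j M with hU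
  have hincl : {ω | L (hstar (Mhat ω)) ≠ L (hstar istar)} ⊆ U := by
    intro ω hω
    by_contra hωU
    have key : ∀ (j : Fin m) (i : J), ∀ h ∈ Mset i,
        |trainRisk j ω h - L h| ≤ εstar/8 ∧ |valRisk j ω h - L h| ≤ εstar/4 := by
      intro j i h hh
      obtain ⟨M, hM, hsub⟩ := hmax i
      have hMF : M ∈ F := hMaxFin.mem_toFinset.2 hM
      have hnot : ω ∉ E j M := fun hmem =>
        hωU (Set.mem_iUnion.2 ⟨j, Set.mem_biUnion hMF hmem⟩)
      constructor
      · by_contra hc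
        exact hnot (Or.inl ⟨h, hsub hh, lt_of_not_ge hc⟩)
      · by_contra hc
        exact hnot (Or.inr ⟨h, hsub hh, lt_of_not_ge hc⟩)
    have hvb : ∀ (j : Fin m) (i : J),
        L (hstar i) - εstar/4 ≤ valRisk j ω (erm j i ω) ∧
        valRisk j ω (erm j i ω) ≤ L (hstar i) + εstar/2 := by
      intro j i
      obtain ⟨hte, hve⟩ := key j i _ (hermMem j i ω)
      obtain ⟨hts, -⟩ := key j i _ (hstarMem i)
      have h1 := hermMin j i ω (hstar i) (hstarMem i)
      have h2 := hstarMin i _ (hermMem j i ω)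
      have hte' := abs_le.1 hte
      have hve' := abs_le.1 hve
      have hts' := abs_le.1 hts
      constructor <;> [skip; skip] <;>
        · obtain ⟨a1, a2⟩ := hte'
          obtain ⟨b1, b2⟩ := hve'
          obtain ⟨c1, c2⟩ := hts'
          linarith
    have hub : ∀ i, Lhat ω i ≤ L (hstar i) + εstar/2 := by
      intro i
      rw [hLhat ω i]
      have hsum : ∑ j, valRisk j ω (erm j i ω) ≤
          ∑ _j : Fin m, (L (hstar i) + εstar/2) :=
        Finset.sum_le_sum fun j _ => (hvb j i).2
      have hconst : ∑ _j : Fin m, (L (hstar i) + εstar/2)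
          = (m:ℝ) * (L (hstar i) + εstar/2) := by
        rw [Finset.sum_const, Finset.card_univ, Fintype.card_fin, nsmul_eq_mul]
      calc (m : ℝ)⁻¹ * ∑ j, valRisk j ω (erm j i ω)
          ≤ (m:ℝ)⁻¹ * ((m:ℝ) * (L (hstar i) + εstar/2)) := by
            rw [← hconst]; exact mul_le_mul_of_nonneg_left hsum (by positivity)
        _ = L (hstar i) + εstar/2 := by field_simp
    have hlb : ∀ i, L (hstar i) - εstar/4 ≤ Lhat ω i := by
      intro i
      rw [hLhat ω i]
      have hsum : ∑ _j : Fin m, (L (hstar i) - εstar/4) ≤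
          ∑ j, valRisk j ω (erm j i ω) :=
        Finset.sum_le_sum fun j _ => (hvb j i).1
      have hconst : ∑ _j : Fin m, (L (hstar i) - εstar/4)
          = (m:ℝ) * (L (hstar i) - εstar/4) := by
        rw [Finset.sum_const, Finset.card_univ, Fintype.card_fin, nsmul_eq_mul]
      calc L (hstar i) - εstar/4
          = (m:ℝ)⁻¹ * ((m:ℝ) * (L (hstar i) - εstar/4)) := by field_simp
        _ ≤ (m : ℝ)⁻¹ * ∑ j, valRisk j ω (erm j i ω) := by
            rw [← hconst] at *
            exact mul_le_mul_of_nonneg_left hsum (by positivity)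
    have hgt : L (hstar istar) < L (hstar (Mhat ω)) :=
      lt_of_le_of_ne (histar _) (Ne.symm hω)
    have hεle : εstar ≤ L (hstar (Mhat ω)) - L (hstar istar) :=
      hlbε ⟨Mhat ω, hgt, rfl⟩
    have hmin := hMhat ω istar
    have h1 := hub istar
    have h2 := hlb (Mhat ω)
    linarith
  have hEbound : ∀ (j : Fin m), ∀ M ∈ F, (μ (E j M)).toReal ≤
      B (εstar/8) D + Bhat (εstar/4) D := by
    intro j M hMF
    obtain ⟨⟨i, rfl⟩, -⟩ := hMaxFin.mem_toFinset.1 hMF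
    have hdle : dVC ℓ C (Mset i) ≤ D :=
      le_ciSup (f := fun i => dVC ℓ C (Mset i)) ((Set.finite_range _).bddAbove) i
    have hA : (μ {ω | ∃ h ∈ Mset i, εstar/8 < |trainRisk j ω h - L h|}).toReal ≤
        B (εstar/8) D :=
      le_trans (hB (εstar/8) (by linarith) i j) (hBmono _ (by linarith) hdle)
    have hAh : (μ {ω | ∃ h ∈ Mset i, εstar/4 < |valRisk j ω h - L h|}).toReal ≤
        Bhat (εstar/4) D :=
      le_trans (hBhat (εstar/4) (by linarith) i j) (hBhatmono _ (by linarith) hdle)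
    calc (μ (E j (Mset i))).toReal
        ≤ (μ {ω | ∃ h ∈ Mset i, εstar/8 < |trainRisk j ω h - L h|} +
           μ {ω | ∃ h ∈ Mset i, εstar/4 < |valRisk j ω h - L h|}).toReal := by
          apply ENNReal.toReal_mono
          · exact ENNReal.add_ne_top.2 ⟨measure_ne_top _ _, measure_ne_top _ _⟩
          · exact measure_union_le _ _
      _ = (μ {ω | ∃ h ∈ Mset i, εstar/8 < |trainRisk j ω h - L h|}).toReal +
          (μ {ω | ∃ h ∈ Mset i, εstar/4 < |valRisk j ω h - L h|}).toReal :=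
          ENNReal.toReal_add (measure_ne_top _ _) (measure_ne_top _ _)
      _ ≤ B (εstar/8) D + Bhat (εstar/4) D := add_le_add hA hAh
  have hsumne : (∑ j : Fin m, ∑ M ∈ F, μ (E j M)) ≠ ⊤ := by
    refine (ENNReal.sum_lt_top.2 fun j _ => ?_).ne
    exact ENNReal.sum_lt_top.2 fun M _ => measure_lt_top _ _
  have hUb : (μ U).toReal ≤ ∑ j : Fin m, ∑ M ∈ F, (μ (E j M)).toReal := by
    have h1 : μ U ≤ ∑ j : Fin m, μ (⋃ M ∈ F, E j M) :=
      measure_iUnion_fintype_le _ _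
    have h2 : (∑ j : Fin m, μ (⋃ M ∈ F, E j M)) ≤
        ∑ j : Fin m, ∑ M ∈ F, μ (E j M) :=
      Finset.sum_le_sum fun j _ => measure_biUnion_finset_le _ _
    calc (μ U).toReal ≤ (∑ j : Fin m, ∑ M ∈ F, μ (E j M)).toReal :=
          ENNReal.toReal_mono hsumne (h1.trans h2)
      _ = ∑ j : Fin m, ∑ M ∈ F, (μ (E j M)).toReal := by
          rw [ENNReal.toReal_sum (fun j _ => by
            exact (ENNReal.sum_lt_top.2 fun M _ => measure_lt_top _ _).ne)]
          exact Finset.sum_congr rfl fun j _ =>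
            ENNReal.toReal_sum fun M _ => measure_ne_top _ _
  have hcard : (Set.ncard MaxC : ℝ) = (F.card : ℝ) := by
    rw [Set.ncard_eq_toFinset_card' MaxC]
    norm_cast
    simp [hF, Set.toFinite]
  calc (μ {ω | L (hstar (Mhat ω)) ≠ L (hstar istar)}).toReal
      ≤ (μ U).toReal :=
        ENNReal.toReal_mono (measure_ne_top _ _) (measure_mono hincl)
    _ ≤ ∑ j : Fin m, ∑ M ∈ F, (μ (E j M)).toReal := hUb
    _ ≤ ∑ _j : Fin m, ∑ _M ∈ F, (B (εstar/8) D + Bhat (εstar/4) D) :=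
        Finset.sum_le_sum fun j _ => Finset.sum_le_sum fun M hM => hEbound j M hM
    _ = (m : ℝ) * (Set.ncard MaxC : ℝ) *
        (B (εstar/8) D + Bhat (εstar/4) D) := by
        rw [Finset.sum_const, Finset.sum_const, Finset.card_univ, Fintype.card_fin,
          smul_smul, hcard]
        push_cast
        ring
end

section
/- Assume the loss function is bounded and that for each ε > 0 there are positive real-valued increasing functions B_{N,ε} and B̂_{N,ε} on ℤ₊ such that for every candidate model ℳ ∈ 𝒞 and every j = 1,…,m, ℙ( sup_{h∈ℳ} |L_{D_N^{(j)}}(h) − L(h)| > ε ) ≤ B_{N,ε}(d_VC(ℳ,ℓ)) and ℙ( sup_{h∈ℳ} |L̂^{(j)}(h) − L(h)| > ε ) ≤ B̂_{N,ε}(d_VC(ℳ,ℓ)). Let ℳ̂ be any random model in 𝒞 minimizing the cross-validated estimator L̂ over 𝒞, and let h*_{ℳ̂} minimize L over ℳ̂ and h* minimize L over ℋ. Then for every ε > 0, writing ε ∨ ε* = max{ε, ε*}: ℙ( L(h*_{ℳ̂}) − L(h*) > ε ) ≤ m · 𝔪(𝒞) · [ B_{N,(ε∨ε*)/8}(d_VC(𝒞))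 + B̂_{N,(ε∨ε*)/4}(d_VC(𝒞)) ]. -/
open MeasureTheory ProbabilityTheory

/-- bound for the type III estimation error of learning via model selection with
a bounded loss: ℙ( L(h*_{ℳ̂}) − L(h*) > ε ) ≤
m · 𝔪(𝒞) · [ B_{N,(ε∨ε*)/8}(d_VC(𝒞)) + B̂_{N,(ε∨ε*)/4}(d_VC(𝒞)) ]. -/
theorem stmt_5 {Ω 𝒵 H : Type*} [MeasurableSpace Ω] [MeasurableSpace 𝒵]
    (μ : Measure Ω) [IsProbabilityMeasure μ]
    (P : Measure 𝒵) [IsProbabilityMeasure P]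
    (N : ℕ) (hN : 1 ≤ N)
    (Z : Fin N → Ω → 𝒵) (hZmeas : ∀ k, Measurable (Z k))
    (hindep : iIndepFun Z μ)
    (hdist : ∀ k, μ.map (Z k) = P)
    (C : ℝ) (hC : 0 < C)
    (ℓ : 𝒵 → H → ℝ) (hℓ : ∀ z h, ℓ z h ∈ Set.Icc 0 C)
    (hℓmeas : ∀ h, Measurable fun z => ℓ z h)
    (L : H → ℝ) (hL : ∀ h, L h = ∫ z, ℓ z h ∂P)
    {J : Type*} [Fintype J] [Nonempty J]
    (Mset : J → Set H) (hcover : ⋃ i, Mset i = Set.univ)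
    (m : ℕ) (hm : 1 ≤ m)
    (train valid : Fin m → Finset (Fin N))
    (htne : ∀ j, (train j).Nonempty) (hvne : ∀ j, (valid j).Nonempty)
    (hdisj : ∀ j, Disjoint (train j) (valid j))
    (trainRisk valRisk : Fin m → Ω → H → ℝ)
    (htrain : ∀ j ω h,
      trainRisk j ω h = ((train j).card : ℝ)⁻¹ * ∑ k ∈ train j, ℓ (Z k ω) h)
    (hval : ∀ j ω h,
      valRisk j ω h = ((valid j).card : ℝ)⁻¹ * ∑ k ∈ valid j, ℓ (Z k ω) h)
    (erm : Fin m → J → Ω → H)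
    (hermMem : ∀ j i ω, erm j i ω ∈ Mset i)
    (hermMin : ∀ j i ω, ∀ h ∈ Mset i, trainRisk j ω (erm j i ω) ≤ trainRisk j ω h)
    (Lhat : Ω → J → ℝ)
    (hLhat : ∀ ω i, Lhat ω i = (m : ℝ)⁻¹ * ∑ j, valRisk j ω (erm j i ω))
    (hstar : J → H) (hstarMem : ∀ i, hstar i ∈ Mset i)
    (hstarMin : ∀ i, ∀ h ∈ Mset i, L (hstar i) ≤ L h)
    (hstarH : H) (hstarHMin : ∀ h : H, L hstarH ≤ L h)
    (istar : J) (histar : ∀ i, L (hstar istar) ≤ L (hstar i))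
    (εstar : ℝ)
    (hεstar : IsLeast {d : ℝ | ∃ i, L (hstar istar) < L (hstar i) ∧
      d = L (hstar i) - L (hstar istar)} εstar)
    (B Bhat : ℝ → ℕ → ℝ)
    (hBpos : ∀ ε, 0 < ε → ∀ k, 0 < B ε k)
    (hBhatpos : ∀ ε, 0 < ε → ∀ k, 0 < Bhat ε k)
    (hBmono : ∀ ε, 0 < ε → Monotone (B ε))
    (hBhatmono : ∀ ε, 0 < ε → Monotone (Bhat ε))
    (hB : ∀ ε, 0 < ε → ∀ i j,
      (μ {ω | ∃ h ∈ Mset i, ε < |trainRisk j ω h - L h|}).toReal ≤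
        B ε (dVC ℓ C (Mset i)))
    (hBhat : ∀ ε, 0 < ε → ∀ i j,
      (μ {ω | ∃ h ∈ Mset i, ε < |valRisk j ω h - L h|}).toReal ≤
        Bhat ε (dVC ℓ C (Mset i)))
    (Mhat : Ω → J) (hMhat : ∀ ω i, Lhat ω (Mhat ω) ≤ Lhat ω i)
    (ε : ℝ) (hε : 0 < ε) :
    (μ {ω | ε < L (hstar (Mhat ω)) - L hstarH}).toReal ≤
      (m : ℝ) * (Set.ncard {M : Set H | M ∈ Set.range Mset ∧
          ∀ i, M ⊆ Mset i → M = Mset i} : ℝ) *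
        (B (max ε εstar / 8) (⨆ i, dVC ℓ C (Mset i)) +
          Bhat (max ε εstar / 4) (⨆ i, dVC ℓ C (Mset i))) := by
  classical
  set δ := max ε εstar with hδdef
  have hδpos : 0 < δ := lt_of_lt_of_le hε (le_max_left _ _)
  have hδ8 : 0 < δ / 8 := by linarith
  have hδ4 : 0 < δ / 4 := by linarith
  -- L hstarH = L (hstar istar)
  have hLeq : L hstarH = L (hstar istar) := by
    obtain ⟨i0, hi0⟩ : ∃ i0, hstarH ∈ Mset i0 := by
      have h := Set.mem_univ hstarH
      rw [← hcover] at h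
      simpa using h
    have h1 := hstarMin i0 hstarH hi0
    have h2 := histar i0
    have h3 := hstarHMin (hstar istar)
    linarith
  set MaxC : Set (Set H) := {M : Set H | M ∈ Set.range Mset ∧
      ∀ i, M ⊆ Mset i → M = Mset i} with hMaxCdef
  have hMaxFin : MaxC.Finite := (Set.finite_range Mset).subset (fun M hM => hM.1)
  let g : Set H → J := fun M => if h : ∃ i, Mset i = M then h.choose else Classical.arbitrary J
  have hg : ∀ M ∈ MaxC, Mset (g M) = M := by
    intro M hM
    obtain ⟨i, hi⟩ := hM.1
    have h : ∃ i, Mset i = M := ⟨i, hi⟩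
    simp only [g, dif_pos h]
    exact h.choose_spec
  set T : Finset J := hMaxFin.toFinset.image g with hTdef
  have hTcard : (T.card : ℝ) = (Set.ncard MaxC : ℝ) := by
    have hinj : Set.InjOn g hMaxFin.toFinset := by
      intro a ha b hb hab
      rw [Finset.mem_coe, Set.Finite.mem_toFinset] at ha hb
      rw [← hg a ha, ← hg b hb, hab]
    rw [hTdef, Finset.card_image_of_injOn hinj, Set.ncard_eq_toFinset_card MaxC hMaxFin]
  have hmaxsup : ∀ i, ∃ i' ∈ T, Mset i ⊆ Mset i' := by
    intro i
    obtain ⟨i1, hi1mem, hi1max⟩ := Set.Finite.exists_maximalFor Mset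
      {i' | Mset i ⊆ Mset i'} (Set.toFinite _) ⟨i, show Mset i ⊆ Mset i from subset_rfl⟩
    have hM : Mset i1 ∈ MaxC := by
      have hi1mem' : Mset i ⊆ Mset i1 := hi1mem
      refine ⟨⟨i1, rfl⟩, fun i'' hsub => ?_⟩
      exact le_antisymm hsub (hi1max (show Mset i ⊆ Mset i'' from hi1mem'.trans hsub) hsub)
    refine ⟨g (Mset i1), ?_, ?_⟩
    · exact Finset.mem_image_of_mem g (hMaxFin.mem_toFinset.mpr hM)
    · rw [hg _ hM]; exact hi1mem
  set Aev : Fin m → J → Set Ω :=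
    fun j i' => {ω | ∃ h ∈ Mset i', δ / 8 < |trainRisk j ω h - L h|} with hAevdef
  set Bev : Fin m → J → Set Ω :=
    fun j i' => {ω | ∃ h ∈ Mset i', δ / 4 < |valRisk j ω h - L h|} with hBevdef
  set U : Set Ω := ⋃ j, ⋃ i' ∈ T, (Aev j i' ∪ Bev j i') with hUdef
  have hm0 : (0:ℝ) < m := by exact_mod_cast hm
  -- event inclusion
  have hEU : {ω | ε < L (hstar (Mhat ω)) - L hstarH} ⊆ U := by
    intro ω hω
    simp only [Set.mem_setOf_eq] at hω
    by_contra hU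
    have hnotA : ∀ (j : Fin m), ∀ i' ∈ T, ∀ h ∈ Mset i',
        |trainRisk j ω h - L h| ≤ δ / 8 := by
      intro j i' hi' h hh
      by_contra hc
      push_neg at hc
      exact hU (Set.mem_iUnion.mpr ⟨j, Set.mem_iUnion₂.mpr
        ⟨i', hi', Or.inl ⟨h, hh, hc⟩⟩⟩)
    have hnotB : ∀ (j : Fin m), ∀ i' ∈ T, ∀ h ∈ Mset i',
        |valRisk j ω h - L h| ≤ δ / 4 := by
      intro j i' hi' h hh
      by_contra hc
      push_neg at hc
      exact hU (Set.mem_iUnion.mpr ⟨j, Set.mem_iUnion₂.mpr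
        ⟨i', hi', Or.inr ⟨h, hh, hc⟩⟩⟩)
    set i := Mhat ω with hidef
    obtain ⟨i1, hi1T, hsub1⟩ := hmaxsup i
    obtain ⟨i2, hi2T, hsub2⟩ := hmaxsup istar
    have hdiff : δ ≤ L (hstar i) - L (hstar istar) := by
      have hε' : ε < L (hstar i) - L (hstar istar) := by rw [← hLeq]; exact hω
      have hlt : L (hstar istar) < L (hstar i) := by linarith
      have hεs : εstar ≤ L (hstar i) - L (hstar istar) := hεstar.2 ⟨i, hlt, rfl⟩
      exact max_le (le_of_lt hε') hεs
    have hA : ∀ j : Fin m, L (hstar i) - δ / 4 ≤ valRisk j ω (erm j i ω) := by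
      intro j
      have h1 := abs_le.mp (hnotB j i1 hi1T (erm j i ω) (hsub1 (hermMem j i ω)))
      have h2 := hstarMin i (erm j i ω) (hermMem j i ω)
      linarith [h1.1, h1.2]
    have hB2 : ∀ j : Fin m, valRisk j ω (erm j istar ω) ≤ L (hstar istar) + δ / 2 := by
      intro j
      have he : erm j istar ω ∈ Mset i2 := hsub2 (hermMem j istar ω)
      have hs : hstar istar ∈ Mset i2 := hsub2 (hstarMem istar)
      have h1 := abs_le.mp (hnotB j i2 hi2T _ he)
      have h2 := abs_le.mp (hnotA j i2 hi2T _ he)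
      have h3 := abs_le.mp (hnotA j i2 hi2T _ hs)
      have h4 := hermMin j istar ω (hstar istar) (hstarMem istar)
      linarith [h1.1, h1.2, h2.1, h2.2, h3.1, h3.2]
    have hLi : L (hstar i) - δ / 4 ≤ Lhat ω i := by
      rw [hLhat]
      have hsumA : (m:ℝ) * (L (hstar i) - δ / 4) ≤ ∑ j, valRisk j ω (erm j i ω) := by
        calc (m:ℝ) * (L (hstar i) - δ / 4)
            = ∑ _j : Fin m, (L (hstar i) - δ / 4) := by
              simp only [Finset.sum_const, Finset.card_univ, Fintype.card_fin,
                nsmul_eq_mul]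
          _ ≤ _ := Finset.sum_le_sum (fun j _ => hA j)
      rw [inv_mul_eq_div, le_div_iff₀ hm0]
      linarith
    have hListar : Lhat ω istar ≤ L (hstar istar) + δ / 2 := by
      rw [hLhat]
      have hsumB : ∑ j, valRisk j ω (erm j istar ω) ≤ (m:ℝ) * (L (hstar istar) + δ / 2) := by
        calc (∑ j, valRisk j ω (erm j istar ω))
            ≤ ∑ _j : Fin m, (L (hstar istar) + δ / 2) :=
              Finset.sum_le_sum (fun j _ => hB2 j)
          _ = (m:ℝ) * (L (hstar istar) + δ / 2) := by
              simp only [Finset.sum_const, Finset.card_univ, Fintype.card_fin,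
                nsmul_eq_mul]
      rw [inv_mul_eq_div, div_le_iff₀ hm0]
      linarith
    have hmin := hMhat ω istar
    linarith
  -- measure bound
  have hsum : μ {ω | ε < L (hstar (Mhat ω)) - L hstarH} ≤
      ∑ j : Fin m, ∑ i' ∈ T, (μ (Aev j i') + μ (Bev j i')) := by
    refine le_trans (measure_mono hEU) ?_
    refine le_trans (measure_iUnion_le _) ?_
    rw [tsum_fintype]
    refine Finset.sum_le_sum fun j _ => ?_
    refine le_trans (measure_biUnion_finset_le T _) ?_
    exact Finset.sum_le_sum fun i' _ => measure_union_le _ _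
  have hRHSne : (∑ j : Fin m, ∑ i' ∈ T, (μ (Aev j i') + μ (Bev j i'))) ≠ ⊤ := by
    refine (ENNReal.sum_lt_top.mpr fun j _ => ?_).ne
    refine ENNReal.sum_lt_top.mpr fun i' _ => ?_
    exact ENNReal.add_lt_top.mpr ⟨measure_lt_top μ _, measure_lt_top μ _⟩
  have h1 : (μ {ω | ε < L (hstar (Mhat ω)) - L hstarH}).toReal ≤
      ∑ j : Fin m, ∑ i' ∈ T, ((μ (Aev j i')).toReal + (μ (Bev j i')).toReal) := by
    refine le_trans (ENNReal.toReal_mono hRHSne hsum) ?_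
    rw [ENNReal.toReal_sum (fun j _ => by
      refine (ENNReal.sum_lt_top.mpr fun i' _ => ?_).ne
      exact ENNReal.add_lt_top.mpr ⟨measure_lt_top μ _, measure_lt_top μ _⟩)]
    refine le_of_eq (Finset.sum_congr rfl fun j _ => ?_)
    rw [ENNReal.toReal_sum (fun i' _ =>
      (ENNReal.add_lt_top.mpr ⟨measure_lt_top μ _, measure_lt_top μ _⟩).ne)]
    exact Finset.sum_congr rfl fun i' _ =>
      ENNReal.toReal_add (measure_ne_top μ _) (measure_ne_top μ _)
  set d := ⨆ i, dVC ℓ C (Mset i) with hddef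
  have hdle : ∀ i, dVC ℓ C (Mset i) ≤ d :=
    fun i => le_ciSup (f := fun i => dVC ℓ C (Mset i))
      (Set.Finite.bddAbove (Set.finite_range _)) i
  have hAb : ∀ (j : Fin m) (i' : J), (μ (Aev j i')).toReal ≤ B (δ / 8) d :=
    fun j i' => le_trans (hB (δ / 8) hδ8 i' j) (hBmono (δ / 8) hδ8 (hdle i'))
  have hBb : ∀ (j : Fin m) (i' : J), (μ (Bev j i')).toReal ≤ Bhat (δ / 4) d :=
    fun j i' => le_trans (hBhat (δ / 4) hδ4 i' j) (hBhatmono (δ / 4) hδ4 (hdle i'))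
  calc (μ {ω | ε < L (hstar (Mhat ω)) - L hstarH}).toReal
      ≤ ∑ j : Fin m, ∑ i' ∈ T, ((μ (Aev j i')).toReal + (μ (Bev j i')).toReal) := h1
    _ ≤ ∑ _j : Fin m, ∑ _i' ∈ T, (B (δ / 8) d + Bhat (δ / 4) d) :=
        Finset.sum_le_sum fun j _ => Finset.sum_le_sum fun i' _ =>
          add_le_add (hAb j i') (hBb j i')
    _ = (m : ℝ) * (T.card : ℝ) * (B (δ / 8) d + Bhat (δ / 4) d) := by
        simp [Finset.sum_const, Finset.card_univ, nsmul_eq_mul]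
        ring
    _ = (m : ℝ) * (Set.ncard MaxC : ℝ) * (B (δ / 8) d + Bhat (δ / 4) d) := by
        rw [hTcard]
end

section
/- Assume the loss function is bounded, the per-model deviation bounds B_{N,ε}, B̂_{N,ε} for training and validation samples hold for every ℳ ∈ 𝒞 (as increasing functions of VC dimension), and the per-model bound B^{II}_{M,ε} for the type II estimation error under the independent sample D̃_M holds for every ℳ ∈ 𝒞. Let ℳ̂ be any random model in 𝒞 minimizing the cross-validated estimator L̂ over 𝒞, computed from D_N, let ĥ^{D̃_M}_{ℳ̂} minimize the empirical risk L_{D̃_M} over ℳ̂, and let h* minimize L over ℋ. Then for every ε > 0, writing ε/2 ∨ ε* = max{ε/2, ε*}: ℙ( L(ĥ^{D̃_M}_{ℳ̂}) − L(h*) > ε ) ≤ E[ B^{II}_{M,ε/2}(d_VC(ℳ̂,ℓ)) ] + m · 𝔪(𝒞) · [ B_{N,(ε/2∨ε*)/8}(d_VC(𝒞)) + B̂_{N,(ε/2∨ε*)/4}(d_VC(𝒞)) ] ≤ B^{II}_{M,ε/2}(d_VC(𝒞)) + m · 𝔪(𝒞) · [ B_{N,(ε/2∨ε*)/8}(d_VC(𝒞))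 + B̂_{N,(ε/2∨ε*)/4}(d_VC(𝒞)) ]. -/
open MeasureTheory ProbabilityTheory

/-- bound for the type IV estimation error of learning via model selection with
a bounded loss, where the hypothesis is learned on ℳ̂ by ERM over an independent sample D̃_M:
ℙ( L(ĥ^{D̃_M}_{ℳ̂}) − L(h*) > ε ) ≤ E[ B^{II}_{M,ε/2}(d_VC(ℳ̂)) ]
  + m·𝔪(𝒞)·[ B_{N,(ε/2∨ε*)/8}(d_VC(𝒞)) + B̂_{N,(ε/2∨ε*)/4}(d_VC(𝒞)) ]
≤ B^{II}_{M,ε/2}(d_VC(𝒞)) + m·𝔪(𝒞)·[ ... ]. Independence of D̃_M from D_N is modeled by a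
product probability space. -/
theorem stmt_6 {Ω Ω' 𝒵 H : Type*} [MeasurableSpace Ω] [MeasurableSpace Ω']
    [MeasurableSpace 𝒵]
    (μ : Measure Ω) [IsProbabilityMeasure μ]
    (μ' : Measure Ω') [IsProbabilityMeasure μ']
    (P : Measure 𝒵) [IsProbabilityMeasure P]
    (N : ℕ) (hN : 1 ≤ N)
    (Z : Fin N → Ω → 𝒵) (hZmeas : ∀ k, Measurable (Z k))
    (hindep : iIndepFun Z μ)
    (hdist : ∀ k, μ.map (Z k) = P)
    (M : ℕ) (hM : 1 ≤ M)
    (Ztil : Fin M → Ω' → 𝒵) (hZtilmeas : ∀ l, Measurable (Ztil l))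
    (htilindep : iIndepFun Ztil μ')
    (htildist : ∀ l, μ'.map (Ztil l) = P)
    (C : ℝ) (hC : 0 < C)
    (ℓ : 𝒵 → H → ℝ) (hℓ : ∀ z h, ℓ z h ∈ Set.Icc 0 C)
    (hℓmeas : ∀ h, Measurable fun z => ℓ z h)
    (L : H → ℝ) (hL : ∀ h, L h = ∫ z, ℓ z h ∂P)
    {J : Type*} [Fintype J] [Nonempty J] [MeasurableSpace J] [MeasurableSingletonClass J]
    (Mset : J → Set H) (hcover : ⋃ i, Mset i = Set.univ)
    (m : ℕ) (hm : 1 ≤ m)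
    (train valid : Fin m → Finset (Fin N))
    (htne : ∀ j, (train j).Nonempty) (hvne : ∀ j, (valid j).Nonempty)
    (hdisj : ∀ j, Disjoint (train j) (valid j))
    (trainRisk valRisk : Fin m → Ω → H → ℝ)
    (htrain : ∀ j ω h,
      trainRisk j ω h = ((train j).card : ℝ)⁻¹ * ∑ k ∈ train j, ℓ (Z k ω) h)
    (hval : ∀ j ω h,
      valRisk j ω h = ((valid j).card : ℝ)⁻¹ * ∑ k ∈ valid j, ℓ (Z k ω) h)
    (erm : Fin m → J → Ω → H)
    (hermMem : ∀ j i ω, erm j i ω ∈ Mset i)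
    (hermMin : ∀ j i ω, ∀ h ∈ Mset i, trainRisk j ω (erm j i ω) ≤ trainRisk j ω h)
    (Lhat : Ω → J → ℝ)
    (hLhat : ∀ ω i, Lhat ω i = (m : ℝ)⁻¹ * ∑ j, valRisk j ω (erm j i ω))
    (LDM : Ω' → H → ℝ)
    (hLDM : ∀ ω' h, LDM ω' h = (M : ℝ)⁻¹ * ∑ l, ℓ (Ztil l ω') h)
    (ermTil : J → Ω' → H)
    (hermTilMem : ∀ i ω', ermTil i ω' ∈ Mset i)
    (hermTilMin : ∀ i ω', ∀ h ∈ Mset i, LDM ω' (ermTil i ω') ≤ LDM ω' h)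
    (hstar : J → H) (hstarMem : ∀ i, hstar i ∈ Mset i)
    (hstarMin : ∀ i, ∀ h ∈ Mset i, L (hstar i) ≤ L h)
    (hstarH : H) (hstarHMin : ∀ h : H, L hstarH ≤ L h)
    (istar : J) (histar : ∀ i, L (hstar istar) ≤ L (hstar i))
    (εstar : ℝ)
    (hεstar : IsLeast {d : ℝ | ∃ i, L (hstar istar) < L (hstar i) ∧
      d = L (hstar i) - L (hstar istar)} εstar)
    (B Bhat BII : ℝ → ℕ → ℝ)
    (hBpos : ∀ ε, 0 < ε → ∀ k, 0 < B ε k)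
    (hBhatpos : ∀ ε, 0 < ε → ∀ k, 0 < Bhat ε k)
    (hBIIpos : ∀ ε, 0 < ε → ∀ k, 0 < BII ε k)
    (hBmono : ∀ ε, 0 < ε → Monotone (B ε))
    (hBhatmono : ∀ ε, 0 < ε → Monotone (Bhat ε))
    (hBIImono : ∀ ε, 0 < ε → Monotone (BII ε))
    (hB : ∀ ε, 0 < ε → ∀ i j,
      (μ {ω | ∃ h ∈ Mset i, ε < |trainRisk j ω h - L h|}).toReal ≤
        B ε (dVC ℓ C (Mset i)))
    (hBhat : ∀ ε, 0 < ε → ∀ i j,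
      (μ {ω | ∃ h ∈ Mset i, ε < |valRisk j ω h - L h|}).toReal ≤
        Bhat ε (dVC ℓ C (Mset i)))
    (hBII : ∀ ε, 0 < ε → ∀ i,
      (μ' {ω' | ε < L (ermTil i ω') - L (hstar i)}).toReal ≤
        BII ε (dVC ℓ C (Mset i)))
    (Mhat : Ω → J) (hMhatMeas : Measurable Mhat)
    (hMhat : ∀ ω i, Lhat ω (Mhat ω) ≤ Lhat ω i)
    (ε : ℝ) (hε : 0 < ε) :
    ((μ.prod μ') {ωp | ε < L (ermTil (Mhat ωp.1) ωp.2) - L hstarH}).toReal ≤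
        (∫ ω, BII (ε / 2) (dVC ℓ C (Mset (Mhat ω))) ∂μ) +
          (m : ℝ) * (Set.ncard {S : Set H | S ∈ Set.range Mset ∧
              ∀ i, S ⊆ Mset i → S = Mset i} : ℝ) *
            (B (max (ε / 2) εstar / 8) (⨆ i, dVC ℓ C (Mset i)) +
              Bhat (max (ε / 2) εstar / 4) (⨆ i, dVC ℓ C (Mset i))) ∧
      (∫ ω, BII (ε / 2) (dVC ℓ C (Mset (Mhat ω))) ∂μ) +
          (m : ℝ) * (Set.ncard {S : Set H | S ∈ Set.range Mset ∧
              ∀ i, S ⊆ Mset i → S = Mset i} : ℝ) *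
            (B (max (ε / 2) εstar / 8) (⨆ i, dVC ℓ C (Mset i)) +
              Bhat (max (ε / 2) εstar / 4) (⨆ i, dVC ℓ C (Mset i))) ≤
        BII (ε / 2) (⨆ i, dVC ℓ C (Mset i)) +
          (m : ℝ) * (Set.ncard {S : Set H | S ∈ Set.range Mset ∧
              ∀ i, S ⊆ Mset i → S = Mset i} : ℝ) *
            (B (max (ε / 2) εstar / 8) (⨆ i, dVC ℓ C (Mset i)) +
              Bhat (max (ε / 2) εstar / 4) (⨆ i, dVC ℓ C (Mset i))) := by
  classical
  set dsup := ⨆ i, dVC ℓ C (Mset i) with hdsup_def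
  have hε2 : (0:ℝ) < ε/2 := by linarith
  set a := max (ε/2) εstar with ha_def
  have hapos : (0:ℝ) < a := lt_of_lt_of_le hε2 (le_max_left _ _)
  have ha8 : (0:ℝ) < a/8 := by linarith
  have ha4 : (0:ℝ) < a/4 := by linarith
  have hm0 : (0:ℝ) < m := by exact_mod_cast hm
  have hdsup : ∀ i, dVC ℓ C (Mset i) ≤ dsup := by
    intro i
    rw [hdsup_def]
    exact le_ciSup (f := fun i => dVC ℓ C (Mset i)) (Set.Finite.bddAbove (Set.finite_range _)) i
  -- L hstarH = L (hstar istar)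
  have hLstar : L hstarH = L (hstar istar) := by
    obtain ⟨i0, hi0⟩ : ∃ i, hstarH ∈ Mset i := by
      have h := Set.mem_univ hstarH
      rw [← hcover] at h
      simpa using h
    have h1 := hstarMin i0 hstarH hi0
    have h2 := hstarHMin (hstar istar)
    have h3 := histar i0
    linarith
  -- maximal candidates
  set 𝔐 : Set (Set H) := {S : Set H | S ∈ Set.range Mset ∧ ∀ i, S ⊆ Mset i → S = Mset i}
    with h𝔐
  have hfin : 𝔐.Finite := (Set.finite_range Mset).subset fun S hS => hS.1
  set T : Finset (Set H) := hfin.toFinset with hT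
  have hTcard : (T.card : ℝ) = (Set.ncard 𝔐 : ℝ) := by
    rw [Set.ncard_eq_toFinset_card _ hfin]
  have hmaxAbove : ∀ i : J, ∃ S ∈ T, Mset i ⊆ S := by
    intro i
    have hsfin : {S : Set H | S ∈ Set.range Mset ∧ Mset i ⊆ S}.Finite :=
      (Set.finite_range Mset).subset fun S hS => hS.1
    obtain ⟨S, hSmem, hSmax⟩ := Set.Finite.exists_maximalFor id _ hsfin
      ⟨Mset i, ⟨i, rfl⟩, subset_rfl⟩
    refine ⟨S, ?_, hSmem.2⟩
    rw [hT, Set.Finite.mem_toFinset]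
    exact ⟨hSmem.1, fun i' hsub => subset_antisymm hsub (hSmax ⟨⟨i', rfl⟩, hSmem.2.trans hsub⟩ hsub)⟩
  -- deviation events
  set Etr : Set H → Fin m → Set Ω :=
    fun S j => {ω | ∃ h ∈ S, a/8 < |trainRisk j ω h - L h|} with hEtr
  set Eva : Set H → Fin m → Set Ω :=
    fun S j => {ω | ∃ h ∈ S, a/4 < |valRisk j ω h - L h|} with hEva
  have hEtrB : ∀ S ∈ T, ∀ j, (μ (Etr S j)).toReal ≤ B (a/8) dsup := by
    intro S hS j
    rw [hT, Set.Finite.mem_toFinset] at hS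
    obtain ⟨i, rfl⟩ := hS.1
    exact (hB _ ha8 i j).trans (hBmono _ ha8 (hdsup i))
  have hEvaB : ∀ S ∈ T, ∀ j, (μ (Eva S j)).toReal ≤ Bhat (a/4) dsup := by
    intro S hS j
    rw [hT, Set.Finite.mem_toFinset] at hS
    obtain ⟨i, rfl⟩ := hS.1
    exact (hBhat _ ha4 i j).trans (hBhatmono _ ha4 (hdsup i))
  -- the pointwise argument
  have hpt : ∀ ω : Ω, ε/2 < L (hstar (Mhat ω)) - L (hstar istar) →
      ω ∈ ⋃ S ∈ T, ⋃ j : Fin m, (Etr S j ∪ Eva S j) := by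
    intro ω hω
    by_contra hcon
    have hnot : ∀ S ∈ T, ∀ j : Fin m,
        (∀ h ∈ S, |trainRisk j ω h - L h| ≤ a/8) ∧
        (∀ h ∈ S, |valRisk j ω h - L h| ≤ a/4) := by
      intro S hS j
      constructor
      · intro h hh
        by_contra hc
        push_neg at hc
        exact hcon (Set.mem_biUnion hS (Set.mem_iUnion.2 ⟨j, Or.inl ⟨h, hh, hc⟩⟩))
      · intro h hh
        by_contra hc
        push_neg at hc
        exact hcon (Set.mem_biUnion hS (Set.mem_iUnion.2 ⟨j, Or.inr ⟨h, hh, hc⟩⟩))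
    set i := Mhat ω with hi
    have hgap0 : L (hstar istar) < L (hstar i) := by linarith
    have hgapε : εstar ≤ L (hstar i) - L (hstar istar) := hεstar.2 ⟨i, hgap0, rfl⟩
    have hgap : a ≤ L (hstar i) - L (hstar istar) := max_le (by linarith) hgapε
    obtain ⟨Si, hSiT, hSisub⟩ := hmaxAbove i
    obtain ⟨Ss, hSsT, hSssub⟩ := hmaxAbove istar
    have hinv : ∀ c : ℝ, (m:ℝ)⁻¹ * ((m:ℝ) * c) = c := by
      intro c
      field_simp
    have hLi : L (hstar i) - a/4 ≤ Lhat ω i := by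
      rw [hLhat]
      have hsum : (m:ℝ) * (L (hstar i) - a/4) ≤ ∑ j, valRisk j ω (erm j i ω) := by
        calc (m:ℝ) * (L (hstar i) - a/4)
            = ∑ _j : Fin m, (L (hstar i) - a/4) := by
              rw [Finset.sum_const, Finset.card_univ, Fintype.card_fin, nsmul_eq_mul]
          _ ≤ _ := by
              refine Finset.sum_le_sum fun j _ => ?_
              have h1 := (hnot Si hSiT j).2 (erm j i ω) (hSisub (hermMem j i ω))
              have h2 := hstarMin i (erm j i ω) (hermMem j i ω)
              have h3 := abs_le.1 h1
              linarith [h3.1, h3.2]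
      have h4 := mul_le_mul_of_nonneg_left hsum (inv_nonneg.2 hm0.le)
      rw [hinv] at h4
      exact h4
    have hLs : Lhat ω istar ≤ L (hstar istar) + a/2 := by
      rw [hLhat]
      have hsum : ∑ j, valRisk j ω (erm j istar ω) ≤ (m:ℝ) * (L (hstar istar) + a/2) := by
        calc ∑ j, valRisk j ω (erm j istar ω)
            ≤ ∑ _j : Fin m, (L (hstar istar) + a/2) := by
              refine Finset.sum_le_sum fun j _ => ?_
              have hval := (hnot Ss hSsT j).2 (erm j istar ω) (hSssub (hermMem j istar ω))
              have htr1 := (hnot Ss hSsT j).1 (erm j istar ω) (hSssub (hermMem j istar ω))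
              have htr2 := (hnot Ss hSsT j).1 (hstar istar) (hSssub (hstarMem istar))
              have hmin := hermMin j istar ω (hstar istar) (hstarMem istar)
              have a1 := abs_le.1 hval
              have a2 := abs_le.1 htr1
              have a3 := abs_le.1 htr2
              linarith [a1.1, a1.2, a2.1, a2.2, a3.1, a3.2]
          _ = (m:ℝ) * (L (hstar istar) + a/2) := by
              rw [Finset.sum_const, Finset.card_univ, Fintype.card_fin, nsmul_eq_mul]
      have h4 := mul_le_mul_of_nonneg_left hsum (inv_nonneg.2 hm0.le)
      rw [hinv] at h4
      exact h4
    have hM := hMhat ω istar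
    rw [← hi] at hM
    linarith
  -- measure bound for the selection event
  set A : Set Ω := {ω | ε/2 < L (hstar (Mhat ω)) - L (hstar istar)} with hA
  have hμA : (μ A).toReal ≤
      (m:ℝ) * (Set.ncard 𝔐 : ℝ) * (B (a/8) dsup + Bhat (a/4) dsup) := by
    have h1 : μ A ≤ ∑ S ∈ T, ∑ j : Fin m, (μ (Etr S j) + μ (Eva S j)) := by
      refine (measure_mono (fun ω hω => hpt ω hω)).trans ?_
      refine (measure_biUnion_finset_le T _).trans (Finset.sum_le_sum fun S _ => ?_)
      exact (measure_iUnion_fintype_le μ _).trans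
        (Finset.sum_le_sum fun j _ => measure_union_le _ _)
    have hne : (∑ S ∈ T, ∑ j : Fin m, (μ (Etr S j) + μ (Eva S j))) ≠ ⊤ := by
      refine (ENNReal.sum_lt_top.2 fun S _ => ENNReal.sum_lt_top.2 fun j _ => ?_).ne
      exact ENNReal.add_lt_top.2 ⟨measure_lt_top μ _, measure_lt_top μ _⟩
    have h2 : (μ A).toReal ≤
        ∑ S ∈ T, ∑ j : Fin m, ((μ (Etr S j)).toReal + (μ (Eva S j)).toReal) := by
      refine (ENNReal.toReal_mono hne h1).trans_eq ?_
      rw [ENNReal.toReal_sum (fun S hS => ?_)]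
      · refine Finset.sum_congr rfl fun S hS => ?_
        rw [ENNReal.toReal_sum (fun j hj => ENNReal.add_ne_top.2
          ⟨measure_ne_top μ _, measure_ne_top μ _⟩)]
        exact Finset.sum_congr rfl fun j _ => ENNReal.toReal_add
          (measure_ne_top μ _) (measure_ne_top μ _)
      · exact (ENNReal.sum_lt_top.2 fun j _ => ENNReal.add_lt_top.2
          ⟨measure_lt_top μ _, measure_lt_top μ _⟩).ne
    refine h2.trans ?_
    calc ∑ S ∈ T, ∑ j : Fin m, ((μ (Etr S j)).toReal + (μ (Eva S j)).toReal)
        ≤ ∑ _S ∈ T, ∑ _j : Fin m, (B (a/8) dsup + Bhat (a/4) dsup) :=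
          Finset.sum_le_sum fun S hS => Finset.sum_le_sum fun j _ =>
            add_le_add (hEtrB S hS j) (hEvaB S hS j)
      _ = (T.card : ℝ) * ((m:ℝ) * (B (a/8) dsup + Bhat (a/4) dsup)) := by
          simp [Finset.sum_const, Finset.card_univ, nsmul_eq_mul]
          ring
      _ = (m:ℝ) * (Set.ncard 𝔐 : ℝ) * (B (a/8) dsup + Bhat (a/4) dsup) := by
          rw [hTcard]; ring
  -- the type II part over the product space
  set A' : J → Set Ω' := fun i => {ω' | ε/2 < L (ermTil i ω') - L (hstar i)} with hA'
  set E1 : Set (Ω × Ω') :=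
    {ωp | ε/2 < L (ermTil (Mhat ωp.1) ωp.2) - L (hstar (Mhat ωp.1))} with hE1
  have hE1sub : E1 ⊆ ⋃ i : J, (Mhat ⁻¹' {i}) ×ˢ A' i := by
    intro ωp hωp
    exact Set.mem_iUnion.2 ⟨Mhat ωp.1, ⟨rfl, hωp⟩⟩
  have hprodE1 : ((μ.prod μ') E1).toReal ≤
      ∑ i : J, (μ (Mhat ⁻¹' {i})).toReal * BII (ε/2) (dVC ℓ C (Mset i)) := by
    have h1 : (μ.prod μ') E1 ≤ ∑ i : J, μ (Mhat ⁻¹' {i}) * μ' (A' i) := by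
      refine (measure_mono hE1sub).trans ((measure_iUnion_fintype_le _ _).trans ?_)
      exact Finset.sum_le_sum fun i _ => le_of_eq (Measure.prod_prod _ _)
    have hne : (∑ i : J, μ (Mhat ⁻¹' {i}) * μ' (A' i)) ≠ ⊤ :=
      (ENNReal.sum_lt_top.2 fun i _ => ENNReal.mul_lt_top
        (measure_lt_top μ _) (measure_lt_top μ' _)).ne
    refine (ENNReal.toReal_mono hne h1).trans ?_
    rw [ENNReal.toReal_sum (fun i _ => ENNReal.mul_ne_top
      (measure_ne_top μ _) (measure_ne_top μ' _))]
    refine Finset.sum_le_sum fun i _ => ?_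
    rw [ENNReal.toReal_mul]
    exact mul_le_mul_of_nonneg_left (hBII _ hε2 i) ENNReal.toReal_nonneg
  -- the integral identity
  have hmeaspre : ∀ i : J, MeasurableSet (Mhat ⁻¹' {i}) :=
    fun i => hMhatMeas (measurableSet_singleton i)
  have hrepr : (fun ω => BII (ε/2) (dVC ℓ C (Mset (Mhat ω)))) =
      fun ω => ∑ i : J, (Mhat ⁻¹' {i}).indicator
        (fun _ => BII (ε/2) (dVC ℓ C (Mset i))) ω := by
    funext ω
    rw [Finset.sum_eq_single (Mhat ω)]
    · simp [Set.indicator_apply]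
    · intro i _ hi
      refine Set.indicator_of_notMem (fun h => hi ?_) _
      exact (by simpa using h : Mhat ω = i).symm
    · intro h
      exact absurd (Finset.mem_univ _) h
  have hintble : Integrable (fun ω => BII (ε/2) (dVC ℓ C (Mset (Mhat ω)))) μ := by
    rw [hrepr]
    exact integrable_finset_sum _ fun i _ => (integrable_const _).indicator (hmeaspre i)
  have hintegral : ∫ ω, BII (ε/2) (dVC ℓ C (Mset (Mhat ω))) ∂μ =
      ∑ i : J, (μ (Mhat ⁻¹' {i})).toReal * BII (ε/2) (dVC ℓ C (Mset i)) := by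
    rw [show (fun ω => BII (ε/2) (dVC ℓ C (Mset (Mhat ω)))) =
      fun ω => ∑ i : J, (Mhat ⁻¹' {i}).indicator
        (fun _ => BII (ε/2) (dVC ℓ C (Mset i))) ω from hrepr]
    rw [integral_finset_sum _ fun i _ => (integrable_const _).indicator (hmeaspre i)]
    refine Finset.sum_congr rfl fun i _ => ?_
    rw [integral_indicator_const _ (hmeaspre i), smul_eq_mul]
    rfl
  -- final assembly
  have hA_meas_bound : ((μ.prod μ') (A ×ˢ (Set.univ : Set Ω'))).toReal = (μ A).toReal := by
    rw [Measure.prod_prod, measure_univ, mul_one]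
  have hsubtot : {ωp : Ω × Ω' | ε < L (ermTil (Mhat ωp.1) ωp.2) - L hstarH} ⊆
      E1 ∪ (A ×ˢ (Set.univ : Set Ω')) := by
    intro ωp hωp
    simp only [Set.mem_setOf_eq, hLstar] at hωp
    by_cases h : ε/2 < L (ermTil (Mhat ωp.1) ωp.2) - L (hstar (Mhat ωp.1))
    · exact Or.inl h
    · push_neg at h
      refine Or.inr ⟨?_, Set.mem_univ _⟩
      show ε/2 < L (hstar (Mhat ωp.1)) - L (hstar istar)
      linarith
  have htot : ((μ.prod μ') {ωp : Ω × Ω' | ε < L (ermTil (Mhat ωp.1) ωp.2) - L hstarH}).toReal ≤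
      ((μ.prod μ') E1).toReal + (μ A).toReal := by
    have h1 : (μ.prod μ') {ωp : Ω × Ω' | ε < L (ermTil (Mhat ωp.1) ωp.2) - L hstarH} ≤
        (μ.prod μ') E1 + (μ.prod μ') (A ×ˢ (Set.univ : Set Ω')) :=
      (measure_mono hsubtot).trans (measure_union_le _ _)
    refine (ENNReal.toReal_mono ?_ h1).trans_eq ?_
    · exact (ENNReal.add_lt_top.2 ⟨measure_lt_top _ _, measure_lt_top _ _⟩).ne
    · rw [ENNReal.toReal_add (measure_ne_top _ _) (measure_ne_top _ _), hA_meas_bound]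
  have hE1int : ((μ.prod μ') E1).toReal ≤
      ∫ ω, BII (ε/2) (dVC ℓ C (Mset (Mhat ω))) ∂μ := by
    rw [hintegral]
    exact hprodE1
  constructor
  · calc ((μ.prod μ') {ωp : Ω × Ω' | ε < L (ermTil (Mhat ωp.1) ωp.2) - L hstarH}).toReal
        ≤ ((μ.prod μ') E1).toReal + (μ A).toReal := htot
      _ ≤ (∫ ω, BII (ε/2) (dVC ℓ C (Mset (Mhat ω))) ∂μ) +
          (m:ℝ) * (Set.ncard 𝔐 : ℝ) * (B (a/8) dsup + Bhat (a/4) dsup) :=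
          add_le_add hE1int hμA
  · have hptw : ∀ ω, BII (ε/2) (dVC ℓ C (Mset (Mhat ω))) ≤ BII (ε/2) dsup :=
      fun ω => hBIImono _ hε2 (hdsup _)
    have hmono := integral_mono hintble (integrable_const (BII (ε/2) dsup)) hptw
    rw [integral_const, probReal_univ, one_smul] at hmono
    have hnc : (0:ℝ) ≤ (m:ℝ) * (Set.ncard 𝔐 : ℝ) * (B (a/8) dsup + Bhat (a/4) dsup) := by
      have hBp := hBpos _ ha8 dsup
      have hBhp := hBhatpos _ ha4 dsup
      positivity
    linarith
end
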